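/- Let χ : {1,…,n} → {ℓ,c,r}, let π = {V₁,…,V_t} ∈ IBNC(χ), and let σ be a partition of {1,…,n} with σ ≤ π in the reversed refinement order. Then σ ∈ IBNC(χ) if and only if for every s = 1,…,t the restriction σ|_{V_s} belongs to IBNC(χ|_{V_s}). -/
import Mathlib


namespace FFB

/-- The three letters ℓ, c, r labelling the faces. -/
inductive Letter : Type where
  | l | c | r
deriving DecidableEq

/-- `x` is one of the letters `ℓ`, `c`. -/
def isLC (x : Letter) : Prop := x = Letter.l ∨ x = Letter.c

variable {α : Type*}

/-- The total order `≺_χ` on the index set determined by `χ`: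
the elements of `χ⁻¹{ℓ,c}` in increasing order followed by the elements of
`χ⁻¹{r}` in decreasing order. -/
def chiLT [LT α] (χ : α → Letter) (i j : α) : Prop :=
  (isLC (χ i) ∧ isLC (χ j) ∧ i < j)
  ∨ (isLC (χ i) ∧ χ j = Letter.r)
  ∨ (χ i = Letter.r ∧ χ j = Letter.r ∧ j < i)

/-- A partition (equivalence relation) `π` is `χ`-noncrossing if there is no quadruple
`s₁ ≺_χ r₁ ≺_χ s₂ ≺_χ r₂` with `s₁ ∼ s₂`, `r₁ ∼ r₂` lying in different blocks. -/
def ChiNoncrossing [LT α] (χ : α → Letter) (π : Setoid α) : Prop :=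
  ∀ s₁ r₁ s₂ r₂ : α, chiLT χ s₁ r₁ → chiLT χ r₁ s₂ → chiLT χ s₂ r₂ →
    π s₁ s₂ → π r₁ r₂ → π s₁ r₁

/-- A partition `π` is `χ`-interval if whenever `i < j < k`, `i ∼ k` and `χ j = c`,
then `i, j, k` all lie in the same block. -/
def ChiInterval [LT α] (χ : α → Letter) (π : Setoid α) : Prop :=
  ∀ i j k : α, i < j → j < k → χ j = Letter.c → π i k → π i j

/-- The set of interval-bi-noncrossing partitions with respect to `χ`. -/
def IBNC [LT α] (χ : α → Letter) : Set (Setoid α) :=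
  {π | ChiNoncrossing χ π ∧ ChiInterval χ π}

/-- The set of `χ`-noncrossing partitions. -/
def NC [LT α] (χ : α → Letter) : Set (Setoid α) :=
  {π | ChiNoncrossing χ π}

/-- Restriction of a partition of `α` to a subset `V ⊆ α`. -/
def restrict (V : Set α) (σ : Setoid α) : Setoid V := Setoid.comap Subtype.val σ

/-- Restriction of `χ` to a subset `V ⊆ α`. -/
def restChi (V : Set α) (χ : α → Letter) : V → Letter := fun x => χ x.1

/- `mu` is the Möbius function of the finite poset `P` (with the induced order):
it is the (two-sided) convolution inverse of the zeta function. -/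
open Classical in
def IsMobius {β : Type*} [PartialOrder β] (P : Set β) (mu : β → β → ℂ) : Prop :=
  ∀ a ∈ P, ∀ b ∈ P, a ≤ b →
    ((∑ᶠ c ∈ {c | c ∈ P ∧ a ≤ c ∧ c ≤ b}, mu a c) = if a = b then 1 else 0) ∧
    ((∑ᶠ c ∈ {c | c ∈ P ∧ a ≤ c ∧ c ≤ b}, mu c b) = if a = b then 1 else 0)

section Moments

variable {A : Type*} [Ring A] [LinearOrder α] [Finite α]

/-- `φ_V(z₁,…,zₙ) = φ(z_{l₁} ⋯ z_{l_k})` where `V = {l₁ < ⋯ < l_k}`. -/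
noncomputable def phiV (φ : A → ℂ) (z : α → A) (V : Set α) : ℂ :=
  φ (((Set.toFinite V).toFinset.sort (· ≤ ·)).map z).prod

/-- `φ_σ(z₁,…,zₙ) = ∏_{V ∈ σ} φ_V(z₁,…,zₙ)`. -/
noncomputable def phiPart (φ : A → ℂ) (z : α → A) (σ : Setoid α) : ℂ :=
  ∏ᶠ q : Quotient σ, phiV φ z {y | Quotient.mk σ y = q}

/-- The free-free-Boolean cumulant
`κ_{χ,π}(z₁,…,zₙ) = Σ_{σ ∈ IBNC(χ), σ ≤ π} μ_{IBNC(χ)}(σ,π) φ_σ(z₁,…,zₙ)`,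
where `mu` is (a function which is) the Möbius function of `IBNC(χ)`. -/
noncomputable def cum (φ : A → ℂ) (χ : α → Letter)
    (mu : Setoid α → Setoid α → ℂ) (z : α → A) (π : Setoid α) : ℂ :=
  ∑ᶠ σ ∈ {σ | σ ∈ IBNC χ ∧ σ ≤ π}, mu σ π * phiPart φ z σ

end Moments

/-- Combinatorial free-free-Boolean independence: mixed cumulants vanish.
`F i x` is the face of the `i`-th triple labelled by the letter `x`. -/
def CombFFB {A : Type*} [Ring A] [Algebra ℂ A] (φ : A →ₗ[ℂ] ℂ) {I : Type*}
    (F : I → Letter → NonUnitalSubalgebra ℂ A) : Prop :=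
  ∀ (n : ℕ) (χ : Fin n → Letter) (ω : Fin n → I) (z : Fin n → A),
    (∀ k, z k ∈ F (ω k) (χ k)) → (¬ ∃ i, ∀ k, ω k = i) →
    ∀ mu : Setoid (Fin n) → Setoid (Fin n) → ℂ, IsMobius (IBNC χ) mu →
      cum (⇑φ) χ mu z ⊤ = 0

end FFB

namespace FFB

/-- Let `π ∈ IBNC(χ)` and let `σ ≤ π` (reversed refinement order).  Then
`σ ∈ IBNC(χ)` if and only if for every block `V` of `π` (indexed by `Quotient π`) the
restriction `σ|_V` belongs to `IBNC(χ|_V)`. -/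
theorem mem_IBNC_iff_restrictions_to_blocks (n : ℕ) (χ : Fin n → Letter)
    (π : Setoid (Fin n)) (hπ : π ∈ IBNC χ)
    (σ : Setoid (Fin n)) (hle : σ ≤ π) :
    σ ∈ IBNC χ ↔ ∀ q : Quotient π,
      restrict {y | Quotient.mk π y = q} σ ∈ IBNC (restChi {y | Quotient.mk π y = q} χ) := by
  constructor
  · rintro ⟨hnc, hint⟩ q
    refine ⟨?_, ?_⟩
    · intro s₁ r₁ s₂ r₂ h1 h2 h3 hs hr
      exact hnc s₁.1 r₁.1 s₂.1 r₂.1 h1 h2 h3 hs hr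
    · intro i j k hij hjk hc hik
      exact hint i.1 j.1 k.1 hij hjk hc hik
  · intro h
    obtain ⟨hπnc, hπint⟩ := hπ
    constructor
    · intro s₁ r₁ s₂ r₂ h1 h2 h3 hs hr
      have hps : π s₁ s₂ := hle hs
      have hpr : π r₁ r₂ := hle hr
      have hsr : π s₁ r₁ := hπnc s₁ r₁ s₂ r₂ h1 h2 h3 hps hpr
      set q := Quotient.mk π s₁ with hq
      have m1 : Quotient.mk π s₁ = q := rfl
      have m2 : Quotient.mk π r₁ = q := Quotient.sound (π.symm hsr)
      have m3 : Quotient.mk π s₂ = q := Quotient.sound (π.symm hps)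
      have m4 : Quotient.mk π r₂ = q :=
        Quotient.sound (π.symm (π.trans hsr hpr))
      exact (h q).1 ⟨s₁, m1⟩ ⟨r₁, m2⟩ ⟨s₂, m3⟩ ⟨r₂, m4⟩ h1 h2 h3 hs hr
    · intro i j k hij hjk hc hik
      have hpik : π i k := hle hik
      have hpij : π i j := hπint i j k hij hjk hc hpik
      set q := Quotient.mk π i with hq
      have m1 : Quotient.mk π i = q := rfl
      have m2 : Quotient.mk π j = q := Quotient.sound (π.symm hpij)
      have m3 : Quotient.mk π k = q := Quotient.sound (π.symm hpik)
      exact (h q).2 ⟨i, m1⟩ ⟨j, m2⟩ ⟨k, m3⟩ hij hjk hc hik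

end FFB
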